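/- Suppose that T is a nonsoluble subgroup of a finite group H such that its normal closure ⟨T^H⟩ is equal to an (internal) direct product of conjugates of T, say ⟨T^H⟩ = T^{x_1} × ... × T^{x_n}, such that every conjugate of T appears among these factors (i.e. T^y ∈ {T^{x_1}, ..., T^{x_n}} for every y ∈ H), and suppose H = F*(H)⟨T^H⟩. Then T is normal in H. -/

import Mathlib

open Subgroup

/-- The conjugate of a subgroup: `S ^ g = { g s g⁻¹ }`. -/
def conjSubgroup {G : Type*} [Group G] (g : G) (S : Subgroup G) : Subgroup G :=
  S.map (MulAut.conj g).toMonoidHom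

/-- A subgroup is subnormal if it can be joined to the whole group by a chain
of successive normal inclusions. -/
def Subgroup.IsSubnormalChain {G : Type*} [Group G] (H : Subgroup G) : Prop :=
  ∃ (n : ℕ) (c : Fin (n + 1) → Subgroup G), c 0 = H ∧ c (Fin.last n) = ⊤ ∧
    ∀ i : Fin n, c i.castSucc ≤ c i.succ ∧
      ∀ x ∈ c i.succ, ∀ h ∈ c i.castSucc, x * h * x⁻¹ ∈ c i.castSucc

/-- A group is quasisimple if it is perfect and its central quotient is a
nonabelian simple group. -/
def IsQuasisimple (Q : Type*) [Group Q] : Prop :=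
  commutator Q = ⊤ ∧ IsSimpleGroup (Q ⧸ Subgroup.center Q) ∧
    ∃ a b : Q ⧸ Subgroup.center Q, a * b ≠ b * a

/-- The Fitting subgroup: the product (join) of all nilpotent normal subgroups. -/
def fittingSubgroup (G : Type*) [Group G] : Subgroup G :=
  sSup {H : Subgroup G | H.Normal ∧ Group.IsNilpotent H}

/-- The generalized Fitting subgroup `F*(G)`: the product of the Fitting subgroup
and all subnormal quasisimple subgroups. -/
def generalizedFitting (G : Type*) [Group G] : Subgroup G :=
  fittingSubgroup G ⊔ sSup {Q : Subgroup G | Q.IsSubnormalChain ∧ IsQuasisimple Q}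

open scoped Classical in
/-- The generalized Fitting series, `F*_0(G) = 1` and `F*_{i+1}(G)` the preimage
of `F*(G / F*_i(G))`. (The terms of the series are indeed normal, so the `⊤`
default branch is never taken.) -/
noncomputable def generalizedFittingSeries (G : Type*) [Group G] : ℕ → Subgroup G
  | 0 => ⊥
  | n + 1 =>
    if h : (generalizedFittingSeries G n).Normal then
      letI := h
      (generalizedFitting (G ⧸ generalizedFittingSeries G n)).comap
        (QuotientGroup.mk' (generalizedFittingSeries G n))
    else ⊤

/-- The generalized Fitting height `h*(G)`: the least `h` with `F*_h(G) = G`. -/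
noncomputable def generalizedFittingHeight (G : Type*) [Group G] : ℕ :=
  sInf {h : ℕ | generalizedFittingSeries G h = ⊤}

open scoped Classical in
/-- The Fitting series. -/
noncomputable def fittingSeries (G : Type*) [Group G] : ℕ → Subgroup G
  | 0 => ⊥
  | n + 1 =>
    if h : (fittingSeries G n).Normal then
      letI := h
      (fittingSubgroup (G ⧸ fittingSeries G n)).comap
        (QuotientGroup.mk' (fittingSeries G n))
    else ⊤

/-- The Fitting height. -/
noncomputable def fittingHeight (G : Type*) [Group G] : ℕ :=
  sInf {h : ℕ | fittingSeries G h = ⊤}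

/-- The derived length: the least `n` with `G^{(n)} = 1`. -/
noncomputable def derivedLength (G : Type*) [Group G] : ℕ :=
  sInf {n : ℕ | derivedSeries G n = ⊥}

/-- The soluble radical: the product (join) of all soluble normal subgroups. -/
def solubleRadical (G : Type*) [Group G] : Subgroup G :=
  sSup {H : Subgroup G | H.Normal ∧ IsSolvable H}

/-- A group is an (internal) direct product of nonabelian simple groups. -/
def IsProdOfNonabelianSimples (Q : Type*) [Group Q] : Prop :=
  ∃ (m : ℕ) (S : Fin m → Subgroup Q),
    (∀ i, (S i).Normal) ∧ (∀ i, IsSimpleGroup (S i)) ∧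
    (∀ i, ∃ a b : S i, a * b ≠ b * a) ∧
    iSupIndep S ∧ iSup S = ⊤

/-- The section `M/N` (for `N ≤ M` with `N.subgroupOf M` normal) is soluble. -/
def SectionIsSolvable {G : Type*} [Group G] (N M : Subgroup G) : Prop :=
  N ≤ M ∧ ∃ _h : (N.subgroupOf M).Normal, IsSolvable (M ⧸ N.subgroupOf M)

/-- The section `M/N` is a direct product of nonabelian simple groups. -/
def SectionIsProdOfNonabelianSimples {G : Type*} [Group G] (N M : Subgroup G) : Prop :=
  N ≤ M ∧ ∃ _h : (N.subgroupOf M).Normal,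
    IsProdOfNonabelianSimples (M ⧸ N.subgroupOf M)

/-- The nonsoluble length `λ(G)`: the least number of nonsoluble factors in a
normal series each of whose factors either is soluble or is a direct product of
nonabelian simple groups. -/
noncomputable def nonsolubleLength (G : Type*) [Group G] : ℕ :=
  sInf {n : ℕ | ∃ (k : ℕ) (N : Fin (k + 1) → Subgroup G), Monotone N ∧
    N 0 = ⊥ ∧ N (Fin.last k) = ⊤ ∧ (∀ i, (N i).Normal) ∧
    (∀ i : Fin k, SectionIsSolvable (N i.castSucc) (N i.succ) ∨
      SectionIsProdOfNonabelianSimples (N i.castSucc) (N i.succ)) ∧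
    n = Nat.card {i : Fin k // ¬ SectionIsSolvable (N i.castSucc) (N i.succ)}}

/-! Every conjugate of `T` either equals `T` or centralizes it, so it suffices that `⟨T^H⟩`,
`F(H)` and every subnormal quasisimple subgroup normalize `T`. For `⟨T^H⟩` this is immediate. If
`f` in a nilpotent normal subgroup `F` moved `T`, then `T^f` would centralize `T` while agreeing
with it modulo `F`, so `T' ≤ F` and `T` would be soluble. A subnormal quasisimple `Q` either lies
in `⟨T^H⟩` or centralizes `⟨T^H⟩ ∩ Q`; climbing a subnormal series `Q = C₀ ⊴ C₁ ⊴ ⋯`, the three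
subgroups lemma lets the perfect group `Q` go on centralizing `⟨T^H⟩ ∩ Cᵢ`. -/

namespace Subgroup

variable {G : Type*} [Group G]

theorem commutator_sup_le_of_normal {A B N : Subgroup G} [N.Normal] :
    ⁅A ⊔ N, B ⊔ N⁆ ≤ ⁅A, B⁆ ⊔ N := by
  rw [← QuotientGroup.ker_mk' N, ← comap_map_eq (QuotientGroup.mk' N) ⁅A, B⁆,
    ← map_le_iff_le_comap]
  simp [map_commutator, map_sup]

theorem commutator_eq_bot_of_commutator_commutator_eq_bot {Q M : Subgroup G}
    (hQ : ⁅Q, Q⁆ = Q) (h : ⁅⁅Q, M⁆, Q⁆ = ⊥) : ⁅Q, M⁆ = ⊥ := by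
  have := commutator_commutator_eq_bot_of_rotate h (by rwa [commutator_comm M Q])
  rwa [hQ] at this

theorem commutator_inf_le_inf {Q A B N : Subgroup G} [N.Normal] (hQA : Q ≤ A)
    (hBA : B ≤ normalizer (A : Set G)) : ⁅Q, N ⊓ B⁆ ≤ N ⊓ A := by
  refine le_inf ((commutator_mono le_rfl inf_le_left).trans (commutator_le_right _ _)) ?_
  refine commutator_le.mpr fun q hq m hm => ?_
  rw [commutatorElement_def, mul_assoc, mul_assoc, ← mul_assoc m]
  exact A.mul_mem (hQA hq) ((mem_normalizer_iff.mp (hBA hm.2) q⁻¹).mp (A.inv_mem (hQA hq)))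

theorem isSolvable_of_commutator_le {S F : Subgroup G} (h : ⁅S, S⁆ ≤ F) [Group.IsSolvable F] :
    Group.IsSolvable S := by
  have : Group.IsSolvable (⁅S, S⁆ : Subgroup G) :=
    Group.isSolvable_of_isSolvable_injective (inclusion_injective h)
  refine Group.isSolvable_of_ker_le_range (inclusion (commutator_le_self S)) Abelianization.of ?_
  rw [Abelianization.ker_of, inclusion_range, subgroupOf, ← map_le_iff_le_comap,
    map_subtype_commutator]

end Subgroup

section

variable {G : Type*} [Group G]

theorem conjSubgroup_one (S : Subgroup G) : conjSubgroup 1 S = S := by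
  ext; simp [conjSubgroup]

theorem conjSubgroup_eq_iff_mem_normalizer {g : G} {S : Subgroup G} :
    conjSubgroup g S = S ↔ g ∈ normalizer (S : Set G) :=
  mem_normalizer_iff_map_conj_eq.symm

theorem conjSubgroup_sup_eq_of_mem {N S : Subgroup G} [N.Normal] {g : G} (hg : g ∈ N) :
    conjSubgroup g S ⊔ N = S ⊔ N := by
  have hconj : (QuotientGroup.mk' N).comp (MulAut.conj g).toMonoidHom = QuotientGroup.mk' N := by
    ext t
    simp [(QuotientGroup.eq_one_iff g).mpr hg]
  rw [← QuotientGroup.ker_mk' N, ← comap_map_eq, ← comap_map_eq, conjSubgroup, map_map, hconj]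

theorem commutator_le_of_conjSubgroup_le_centralizer {N S : Subgroup G} [N.Normal] {g : G}
    (hg : g ∈ N) (h : conjSubgroup g S ≤ centralizer S) : ⁅S, S⁆ ≤ N :=
  calc ⁅S, S⁆ ≤ ⁅conjSubgroup g S ⊔ N, S ⊔ N⁆ :=
        commutator_mono (by rw [conjSubgroup_sup_eq_of_mem hg]; exact le_sup_left) le_sup_left
    _ ≤ ⁅conjSubgroup g S, S⁆ ⊔ N := commutator_sup_le_of_normal
    _ = N := by rw [commutator_eq_bot_iff_le_centralizer.mpr h, bot_sup_eq]

theorem IsQuasisimple.eq_top_or_le_center {Q : Type*} [Group Q] (hQ : IsQuasisimple Q)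
    (M : Subgroup Q) [M.Normal] : M = ⊤ ∨ M ≤ center Q := by
  have := hQ.2.1
  rcases (‹M.Normal›.map _ (QuotientGroup.mk'_surjective (center Q))).eq_bot_or_eq_top with h | h
  · right
    rwa [Subgroup.map_eq_bot_iff, QuotientGroup.ker_mk'] at h
  · left
    have hsup : center Q ⊔ M = ⊤ := by
      rw [sup_comm, ← QuotientGroup.ker_mk' (center Q), ← comap_map_eq, h, comap_top]
    have hcenter : ⁅center Q, center Q⁆ = ⊥ :=
      commutator_eq_bot_iff_le_centralizer.mpr (le_centralizer (center Q))
    refine top_le_iff.mp ?_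
    calc ⊤ = ⁅center Q ⊔ M, center Q ⊔ M⁆ := by rw [hsup, ← _root_.commutator_def, hQ.1]
      _ ≤ ⁅center Q, center Q⁆ ⊔ M := commutator_sup_le_of_normal
      _ = M := by rw [hcenter, bot_sup_eq]

theorem IsQuasisimple.le_or_commutator_inf_eq_bot {Q N : Subgroup G} (hQ : IsQuasisimple Q)
    [N.Normal] : Q ≤ N ∨ ⁅Q, N ⊓ Q⁆ = ⊥ := by
  rcases hQ.eq_top_or_le_center (N.subgroupOf Q) with h | h
  · exact Or.inl (subgroupOf_eq_top.mp h)
  · refine Or.inr (commutator_eq_bot_iff_le_centralizer.mpr fun q hq m hm => ?_)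
    have hmN : (⟨m, hm.2⟩ : Q) ∈ N.subgroupOf Q := hm.1
    exact (congrArg Subtype.val (mem_center_iff.mp (h hmN) ⟨q, hq⟩)).symm

theorem Subgroup.IsSubnormalChain.le_or_commutator_eq_bot {Q N : Subgroup G}
    (hsub : Q.IsSubnormalChain) (hQ : IsQuasisimple Q) [N.Normal] : Q ≤ N ∨ ⁅Q, N⁆ = ⊥ := by
  obtain ⟨k, c, hc0, hctop, hc⟩ := hsub
  have hperf : ⁅Q, Q⁆ = Q := isPerfect_iff.mp ⟨hQ.1⟩
  suffices ∀ i, Q ≤ c i ∧ (Q ≤ N ∨ ⁅Q, N ⊓ c i⁆ = ⊥) by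
    simpa [hctop] using (this (Fin.last k)).2
  intro i
  induction i using Fin.induction with
  | zero => rw [hc0]; exact ⟨le_rfl, hQ.le_or_commutator_inf_eq_bot⟩
  | succ i ih =>
    obtain ⟨hQi, hi⟩ := ih
    obtain ⟨hle, hnormal⟩ := hc i
    have hnorm : c i.succ ≤ normalizer (c i.castSucc : Set G) :=
      (normal_subgroupOf_iff_le_normalizer hle).mp
        ((normal_subgroupOf_iff hle).mpr fun h k hh hk => hnormal k hk h hh)
    refine ⟨hQi.trans hle, hi.imp_right fun h => ?_⟩
    refine commutator_eq_bot_of_commutator_commutator_eq_bot hperf (le_bot_iff.mp ?_)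
    calc ⁅⁅Q, N ⊓ c i.succ⁆, Q⁆ ≤ ⁅N ⊓ c i.castSucc, Q⁆ :=
          commutator_mono (commutator_inf_le_inf hQi hnorm) le_rfl
      _ = ⊥ := by rw [commutator_comm, h]

end

section

variable {G : Type*} [Group G] {T : Subgroup G}

theorem normalClosure_le_normalizer_of_forall_conjSubgroup
    (hconj : ∀ g : G, conjSubgroup g T = T ∨ conjSubgroup g T ≤ centralizer T) :
    normalClosure (T : Set G) ≤ normalizer (T : Set G) := by
  refine (closure_le _).mpr fun y hy => ?_
  obtain ⟨t, ht, hty⟩ := Group.mem_conjugatesOfSet_iff.mp hy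
  obtain ⟨g, rfl⟩ := isConj_iff.mp hty
  have hy : g * t * g⁻¹ ∈ conjSubgroup g T := ⟨t, ht, rfl⟩
  rcases hconj g with h | h
  · exact le_normalizer (h ▸ hy)
  · exact centralizer_le_normalizer _ (h hy)

theorem fittingSubgroup_le_normalizer_of_forall_conjSubgroup (hT : ¬ Group.IsSolvable T)
    (hconj : ∀ g : G, conjSubgroup g T = T ∨ conjSubgroup g T ≤ centralizer T) :
    fittingSubgroup G ≤ normalizer (T : Set G) := by
  refine sSup_le fun F ⟨hF, hFnil⟩ f hf => ?_
  refine conjSubgroup_eq_iff_mem_normalizer.mp ((hconj f).resolve_right fun h => hT ?_)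
  exact isSolvable_of_commutator_le (commutator_le_of_conjSubgroup_le_centralizer hf h)

theorem generalizedFitting_le_normalizer_of_forall_conjSubgroup (hT : ¬ Group.IsSolvable T)
    (hconj : ∀ g : G, conjSubgroup g T = T ∨ conjSubgroup g T ≤ centralizer T) :
    generalizedFitting G ≤ normalizer (T : Set G) := by
  refine sup_le (fittingSubgroup_le_normalizer_of_forall_conjSubgroup hT hconj) ?_
  refine sSup_le fun Q ⟨hsub, hQ⟩ => ?_
  have : (normalClosure (T : Set G)).Normal := normalClosure_normal
  rcases IsSubnormalChain.le_or_commutator_eq_bot (N := normalClosure (T : Set G)) hsub hQ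
    with h | h
  · exact h.trans (normalClosure_le_normalizer_of_forall_conjSubgroup hconj)
  · calc Q ≤ centralizer (normalClosure (T : Set G)) := commutator_eq_bot_iff_le_centralizer.mp h
      _ ≤ centralizer T := centralizer_le subset_normalClosure
      _ ≤ normalizer (T : Set G) := centralizer_le_normalizer _

theorem normal_of_forall_conjSubgroup (hT : ¬ Group.IsSolvable T)
    (hconj : ∀ g : G, conjSubgroup g T = T ∨ conjSubgroup g T ≤ centralizer T)
    (hG : generalizedFitting G ⊔ normalClosure (T : Set G) = ⊤) : T.Normal :=
  normalizer_eq_top_iff.mp <| top_le_iff.mp <| hG ▸ sup_le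
    (generalizedFitting_le_normalizer_of_forall_conjSubgroup hT hconj)
    (normalClosure_le_normalizer_of_forall_conjSubgroup hconj)

end

theorem normal_of_nonsoluble_of_normalClosure_eq_directProduct_general
    {H : Type*} [Group H] (T : Subgroup H) (hT : ¬ IsSolvable T)
    (n : ℕ) (x : Fin n → H)
    (hcomm : ∀ i j, i ≠ j →
      ∀ a ∈ conjSubgroup (x i) T, ∀ b ∈ conjSubgroup (x j) T, a * b = b * a)
    (hall : ∀ y : H, ∃ i, conjSubgroup y T = conjSubgroup (x i) T)
    (hfact : generalizedFitting H ⊔ Subgroup.normalClosure (T : Set H) = ⊤) :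
    T.Normal := by
  obtain ⟨i₀, hi₀⟩ := hall 1
  rw [conjSubgroup_one] at hi₀
  refine normal_of_forall_conjSubgroup hT (fun g => ?_) hfact
  obtain ⟨i, hi⟩ := hall g
  rw [hi]
  by_cases hii₀ : i = i₀
  · exact Or.inl (hii₀ ▸ hi₀.symm)
  · exact Or.inr fun a ha b hb => (hcomm i i₀ hii₀ a ha b (hi₀ ▸ hb)).symm

/-- If `T` is a nonsoluble subgroup of a finite group `H` whose normal closure
`⟨T^H⟩` is the direct product of conjugates `T^{x 1} × ⋯ × T^{x n}`, every
conjugate of `T` appears among these factors, and `H = F*(H)⟨T^H⟩`, then `T`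
is normal in `H`. -/
theorem normal_of_nonsoluble_of_normalClosure_eq_directProduct
    {H : Type*} [Group H] [Finite H] (T : Subgroup H) (hT : ¬ IsSolvable T)
    (n : ℕ) (x : Fin n → H)
    (hclosure : Subgroup.normalClosure (T : Set H) = ⨆ i, conjSubgroup (x i) T)
    (hindep : iSupIndep fun i => conjSubgroup (x i) T)
    (hcomm : ∀ i j, i ≠ j →
      ∀ a ∈ conjSubgroup (x i) T, ∀ b ∈ conjSubgroup (x j) T, a * b = b * a)
    (hall : ∀ y : H, ∃ i, conjSubgroup y T = conjSubgroup (x i) T)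
    (hfact : generalizedFitting H ⊔ Subgroup.normalClosure (T : Set H) = ⊤) :
    T.Normal :=
  normal_of_nonsoluble_of_normalClosure_eq_directProduct_general T hT n x hcomm hall hfact
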